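/- Under the same hypotheses, the map λ : C_c(G//K) → ℂ defined by λ(f) = (f ∗ φ)(e) is an algebra homomorphism for the convolution product: λ(f ∗ g) = λ(f)·λ(g) for all K-bi-invariant f, g ∈ C_c(G). -/

import Mathlib

open MeasureTheory

/-! Pairing `f ∗ g` with `φ ∘ inv` and applying Fubini and left invariance gives
`λ(f ∗ g) = ∫ f(y) (g ∗ φ)(y⁻¹) dy`. Averaging over `K` (allowed since `g` is left `K`-invariant)
and the product formula for `φ` show `g ∗ φ = λ(g) φ`, so the integral is `λ(f) λ(g)`. -/

section

variable {G 𝕜 : Type*} [Group G] [TopologicalSpace G] [IsTopologicalGroup G]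
  [MeasurableSpace G] [BorelSpace G] [RCLike 𝕜]
  {μ : Measure G} [μ.IsMulLeftInvariant] [IsFiniteMeasureOnCompacts μ]

theorem integral_convolution_mul {f g h : G → 𝕜} (hfc : Continuous f) (hfs : HasCompactSupport f)
    (hgc : Continuous g) (hgs : HasCompactSupport g) (hc : Continuous h) :
    ∫ x, (∫ y, f y * g (y⁻¹ * x) ∂μ) * h x ∂μ = ∫ y, f y * ∫ x, g x * h (y * x) ∂μ ∂μ := by
  have hsupp : HasCompactSupport (Function.uncurry fun x y : G ↦ f y * g (y⁻¹ * x) * h x) := by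
    refine HasCompactSupport.intro ((hfs.mul hgs).prod hfs) fun ⟨x, y⟩ hxy ↦ ?_
    by_cases hy : f y = 0
    · simp [hy]
    by_cases hyx : g (y⁻¹ * x) = 0
    · simp [hyx]
    exact absurd ⟨⟨y, subset_tsupport _ hy, y⁻¹ * x, subset_tsupport _ hyx, by group⟩,
      subset_tsupport _ hy⟩ hxy
  calc ∫ x, (∫ y, f y * g (y⁻¹ * x) ∂μ) * h x ∂μ
      = ∫ x, ∫ y, f y * g (y⁻¹ * x) * h x ∂μ ∂μ := by simp_rw [integral_mul_const]
    _ = ∫ y, ∫ x, f y * g (y⁻¹ * x) * h x ∂μ ∂μ :=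
        integral_integral_swap_of_hasCompactSupport (by fun_prop) hsupp
    _ = ∫ y, f y * ∫ x, g (y⁻¹ * x) * h x ∂μ ∂μ := by simp_rw [mul_assoc, integral_const_mul]
    _ = ∫ y, f y * ∫ x, g x * h (y * x) ∂μ ∂μ := by
        congr! 2 with y
        rw [← integral_mul_left_eq_self _ y]
        simp

theorem integral_mul_apply_inv_mul_of_product_formula {K : Subgroup G} [CompactSpace K]
    {νK : Measure K} [IsProbabilityMeasure νK] {φ : G → 𝕜} (hφc : Continuous φ)
    (hsph : ∀ x y : G, ∫ k : K, φ (x * (k : G) * y) ∂νK = φ x * φ y)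
    {g : G → 𝕜} (hgc : Continuous g) (hgs : HasCompactSupport g)
    (hgK : ∀ (k : K) (x : G), g ((k : G) * x) = g x) (y : G) :
    ∫ x, g x * φ (x⁻¹ * y) ∂μ = (∫ x, g x * φ x⁻¹ ∂μ) * φ y := by
  have htranslate (k : K) : ∫ x, g x * φ (x⁻¹ * k * y) ∂μ = ∫ x, g x * φ (x⁻¹ * y) ∂μ := by
    rw [← integral_mul_left_eq_self _ (k : G)]
    simp [hgK, mul_assoc]
  have hsupp : HasCompactSupport (Function.uncurry fun (k : K) x ↦ g x * φ (x⁻¹ * k * y)) := by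
    refine HasCompactSupport.intro (isCompact_univ.prod hgs) fun ⟨k, x⟩ hkx ↦ ?_
    have hx : g x = 0 := image_eq_zero_of_notMem_tsupport fun hx ↦ hkx ⟨trivial, hx⟩
    simp [hx]
  -- the inner integral is constant in `k` and `νK` has mass one
  calc ∫ x, g x * φ (x⁻¹ * y) ∂μ
      = ∫ k : K, ∫ x, g x * φ (x⁻¹ * k * y) ∂μ ∂νK := by simp [htranslate]
    _ = ∫ x, ∫ k : K, g x * φ (x⁻¹ * k * y) ∂νK ∂μ :=
        integral_integral_swap_of_hasCompactSupport (by fun_prop) hsupp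
    _ = ∫ x, g x * φ x⁻¹ * φ y ∂μ := by simp_rw [integral_const_mul, hsph, mul_assoc]
    _ = (∫ x, g x * φ x⁻¹ ∂μ) * φ y := integral_mul_const _ _

end

theorem sphericalEval_convolution_mul_general {G : Type*} [Group G] [TopologicalSpace G]
    [IsTopologicalGroup G] [MeasurableSpace G] [BorelSpace G]
    (μ : Measure G) [μ.IsHaarMeasure]
    (K : Subgroup G) [CompactSpace K]
    (νK : Measure K) [IsProbabilityMeasure νK]
    (φ : G → ℂ) (hφc : Continuous φ)
    (hsph : ∀ x y : G, ∫ k : K, φ (x * (k : G) * y) ∂νK = φ x * φ y)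
    (f g : G → ℂ)
    (hfc : Continuous f) (hfs : HasCompactSupport f)
    (hgc : Continuous g) (hgs : HasCompactSupport g)
    (hgK : ∀ (k₁ k₂ : K) (x : G), g ((k₁ : G) * x * (k₂ : G)) = g x) :
    ∫ x, (∫ y, f y * g (y⁻¹ * x) ∂μ) * φ x⁻¹ ∂μ
      = (∫ y, f y * φ y⁻¹ ∂μ) * ∫ y, g y * φ y⁻¹ ∂μ := by
  have hgK_left (k : K) (x : G) : g ((k : G) * x) = g x := by simpa using hgK k 1 x
  calc ∫ x, (∫ y, f y * g (y⁻¹ * x) ∂μ) * φ x⁻¹ ∂μ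
      = ∫ y, f y * ∫ x, g x * φ (x⁻¹ * y⁻¹) ∂μ ∂μ := by
        simp_rw [integral_convolution_mul hfc hfs hgc hgs (h := fun x ↦ φ x⁻¹) (by fun_prop),
          mul_inv_rev]
    _ = ∫ y, (∫ x, g x * φ x⁻¹ ∂μ) * (f y * φ y⁻¹) ∂μ := by
        simp_rw [integral_mul_apply_inv_mul_of_product_formula hφc hsph hgc hgs hgK_left,
          mul_left_comm]
    _ = (∫ y, f y * φ y⁻¹ ∂μ) * ∫ y, g y * φ y⁻¹ ∂μ := by rw [integral_const_mul, mul_comm]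

/-- The map `λ(f) = (f ∗ φ)(e)` on K-bi-invariant `f ∈ C_c(G)` is multiplicative for
the convolution product: `λ(f ∗ g) = λ(f)·λ(g)`. -/
theorem sphericalEval_convolution_mul {G : Type*} [Group G] [TopologicalSpace G]
    [IsTopologicalGroup G] [LocallyCompactSpace G] [MeasurableSpace G] [BorelSpace G]
    (μ : Measure G) [μ.IsHaarMeasure] [μ.IsMulRightInvariant]
    (K : Subgroup G) [CompactSpace K]
    (νK : Measure K) [IsProbabilityMeasure νK] [νK.IsHaarMeasure]
    (φ : G → ℂ) (hφc : Continuous φ) (hφe : φ 1 = 1)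
    (hφbi : ∀ (k₁ k₂ : K) (x : G), φ ((k₁ : G) * x * (k₂ : G)) = φ x)
    (hsph : ∀ x y : G, ∫ k : K, φ (x * (k : G) * y) ∂νK = φ x * φ y)
    (f g : G → ℂ)
    (hfc : Continuous f) (hfs : HasCompactSupport f)
    (hgc : Continuous g) (hgs : HasCompactSupport g)
    (hfK : ∀ (k₁ k₂ : K) (x : G), f ((k₁ : G) * x * (k₂ : G)) = f x)
    (hgK : ∀ (k₁ k₂ : K) (x : G), g ((k₁ : G) * x * (k₂ : G)) = g x) :
    ∫ x, (∫ y, f y * g (y⁻¹ * x) ∂μ) * φ x⁻¹ ∂μ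
      = (∫ y, f y * φ y⁻¹ ∂μ) * ∫ y, g y * φ y⁻¹ ∂μ :=
  sphericalEval_convolution_mul_general μ K νK φ hφc hsph f g hfc hfs hgc hgs hgK
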